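/- Consider the random assignment process: p₁ = 1; for i ≥ 2, p_i is uniform over {1,2,3} \ {p_{i−1}}; and each q_j is uniform over {1,2}, independently of everything else. Then for every pair (i,j) with |i − j| ≥ 2, the probability that p_i = p_j and q_i ≠ q_j is at least 1/8. -/

import Mathlib

/-!
Overwriting the two coins that produce `p_j` from `p_{j-2}` can steer the chain to any value, in
particular to `p_i` (which they do not affect when `i + 2 ≤ j`), and overwriting `q_j` by the
value other than `q_i` makes `q_i ≠ q_j`. This map from all outcomes into the event forgets only
the three overwritten bits, so it is at most `2³ = 8`-to-one.
-/

/-- Given the current value `a ∈ {1,2,3}` (as `Fin 3`) and a uniform bit `b`, pick one of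
the two values different from `a`: the candidates `a+1` and `a+2` (mod 3) are exactly the
two elements of `Fin 3 \ {a}`. -/
def nextP (a : Fin 3) (b : Fin 2) : Fin 3 := a + 1 + ⟨b.val, by omega⟩

/-- The random process for `p`: `p₁` is a fixed value, and `p_{i+1}` is chosen uniformly
among the two values different from `p_i`, the choice being driven by the coin `c (i+1)`. -/
def pSeq (c : ℕ → Fin 2) : ℕ → Fin 3
  | 0 => 1
  | n + 1 => nextP (pSeq c n) (c (n + 1))

open Function

theorem Function.eq_of_update_eq_update {α β : Type*} [DecidableEq α] {f g : α → β} {a : α}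
    {u v : β} (h : update f a u = update g a v) (ha : f a = g a) : f = g := by
  calc f = update (update f a u) a (f a) := by simp
    _ = update (update g a v) a (g a) := by rw [h, ha]
    _ = g := by simp

theorem pSeq_congr {c c' : ℕ → Fin 2} {n : ℕ} (h : ∀ m ≤ n, c m = c' m) :
    pSeq c n = pSeq c' n := by
  induction n with
  | zero => rfl
  | succ k ih => rw [pSeq, pSeq, ih fun m hm => h m (by omega), h (k + 1) le_rfl]

-- Two steps move `a` by `2 + b₁ + b₂`, so it suffices to realise `t - (a + 2) ∈ {0, 1, 2}`.
def steer (a t : Fin 3) : Fin 2 × Fin 2 :=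
  if t - (a + 2) = 0 then (0, 0) else if t - (a + 2) = 1 then (0, 1) else (1, 1)

theorem nextP_nextP_steer : ∀ a t : Fin 3, nextP (nextP a (steer a t).1) (steer a t).2 = t := by
  decide

section Coins

variable {ℓ : ℕ} (hℓ : 0 < ℓ)

abbrev Outcome (ℓ : ℕ) : Type := (Fin ℓ → Fin 2) × (Fin ℓ → Fin 2)

-- The coin sequence of the statement; it wraps around modulo `ℓ`, but only indices below `ℓ`
-- are ever read.
def coins (x : Fin ℓ → Fin 2) : ℕ → Fin 2 := fun n => x ⟨n % ℓ, Nat.mod_lt n hℓ⟩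

theorem coins_of_lt (x : Fin ℓ → Fin 2) {n : ℕ} (hn : n < ℓ) : coins hℓ x n = x ⟨n, hn⟩ :=
  congrArg x (Fin.ext (Nat.mod_eq_of_lt hn))

theorem pSeq_coins_congr {x y : Fin ℓ → Fin 2} {n : ℕ} (hn : n < ℓ)
    (h : ∀ k : Fin ℓ, (k : ℕ) ≤ n → x k = y k) : pSeq (coins hℓ x) n = pSeq (coins hℓ y) n :=
  pSeq_congr fun m hm => by
    rw [coins_of_lt hℓ x (by omega), coins_of_lt hℓ y (by omega)]
    exact h _ hm

def matchEvent (i j : Fin ℓ) : Finset (Outcome ℓ) :=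
  Finset.univ.filter fun ω => pSeq (coins hℓ ω.1) i = pSeq (coins hℓ ω.1) j ∧ ω.2 i ≠ ω.2 j

theorem matchEvent_comm (i j : Fin ℓ) : matchEvent hℓ i j = matchEvent hℓ j i := by
  simp only [matchEvent, eq_comm, ne_comm]

section Steering

variable {n : ℕ} (hn : n + 2 < ℓ)

def steerCoins (t : Fin 3) (x : Fin ℓ → Fin 2) : Fin ℓ → Fin 2 :=
  let b := steer (pSeq (coins hℓ x) n) t
  update (update x ⟨n + 1, by omega⟩ b.1) ⟨n + 2, hn⟩ b.2

theorem steerCoins_of_le (t : Fin 3) (x : Fin ℓ → Fin 2) (k : Fin ℓ) (hk : (k : ℕ) ≤ n) :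
    steerCoins hℓ hn t x k = x k := by
  simp only [steerCoins]
  rw [update_of_ne (by simp [Fin.ext_iff]; omega), update_of_ne (by simp [Fin.ext_iff]; omega)]

theorem pSeq_steerCoins (t : Fin 3) (x : Fin ℓ → Fin 2) :
    pSeq (coins hℓ (steerCoins hℓ hn t x)) (n + 2) = t := by
  have hprefix : pSeq (coins hℓ (steerCoins hℓ hn t x)) n = pSeq (coins hℓ x) n :=
    pSeq_coins_congr hℓ (by omega) fun k hk => steerCoins_of_le hℓ hn t x k hk
  show nextP (nextP _ (coins hℓ _ (n + 1))) (coins hℓ _ (n + 2)) = t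
  rw [hprefix, coins_of_lt hℓ _ (by omega), coins_of_lt hℓ _ hn]
  simpa [steerCoins] using nextP_nextP_steer _ t

def forceMatch (i : Fin ℓ) (ω : Outcome ℓ) : Outcome ℓ :=
  (steerCoins hℓ hn (pSeq (coins hℓ ω.1) i) ω.1, update ω.2 ⟨n + 2, hn⟩ (ω.2 i + 1))

theorem forceMatch_mem {i : Fin ℓ} (hi : (i : ℕ) ≤ n) (ω : Outcome ℓ) :
    forceMatch hℓ hn i ω ∈ matchEvent hℓ i ⟨n + 2, hn⟩ := by
  have hne : i ≠ ⟨n + 2, hn⟩ := by simp [Fin.ext_iff]; omega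
  refine Finset.mem_filter.2 ⟨Finset.mem_univ _, ?_, ?_⟩
  · simp only [forceMatch, pSeq_steerCoins]
    exact pSeq_coins_congr hℓ i.isLt fun k hk => steerCoins_of_le hℓ hn _ _ k (hk.trans hi)
  · simp only [forceMatch, update_of_ne hne, update_self]
    exact left_ne_add.2 one_ne_zero

theorem injective_forceMatch_prod (i : Fin ℓ) :
    Injective fun ω : Outcome ℓ =>
      (forceMatch hℓ hn i ω, ω.1 ⟨n + 1, by omega⟩, ω.1 ⟨n + 2, hn⟩, ω.2 ⟨n + 2, hn⟩) := by
  rintro ⟨x, y⟩ ⟨x', y'⟩ h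
  simp only [forceMatch, steerCoins, Prod.mk.injEq] at h
  obtain ⟨⟨hx, hy⟩, h₁, h₂, h₃⟩ := h
  have hne : (⟨n + 1, by omega⟩ : Fin ℓ) ≠ ⟨n + 2, hn⟩ := by simp [Fin.ext_iff]
  refine Prod.ext (eq_of_update_eq_update (eq_of_update_eq_update hx ?_) h₁)
    (eq_of_update_eq_update hy h₃)
  simp only [update_of_ne hne.symm, h₂]

end Steering

theorem card_outcome_le_eight_mul_card_matchEvent {i j : Fin ℓ} (hij : (i : ℕ) + 2 ≤ j) :
    Fintype.card (Outcome ℓ) ≤ 8 * (matchEvent hℓ i j).card := by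
  obtain ⟨n, hn⟩ : ∃ n, (j : ℕ) = n + 2 := ⟨j - 2, by omega⟩
  have hnℓ : n + 2 < ℓ := hn ▸ j.isLt
  obtain rfl : j = ⟨n + 2, hnℓ⟩ := Fin.ext hn
  calc Fintype.card (Outcome ℓ)
      ≤ Fintype.card (matchEvent hℓ i ⟨n + 2, hnℓ⟩ × Fin 2 × Fin 2 × Fin 2) :=
        Fintype.card_le_of_injective
          (fun ω => (⟨forceMatch hℓ hnℓ i ω, forceMatch_mem hℓ hnℓ (by omega) ω⟩,
            ω.1 ⟨n + 1, by omega⟩, ω.1 ⟨n + 2, hnℓ⟩, ω.2 ⟨n + 2, hnℓ⟩))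
          fun ω ω' h => injective_forceMatch_prod hℓ hnℓ i (by simpa using h)
    _ = 8 * (matchEvent hℓ i ⟨n + 2, hnℓ⟩).card := by simp [mul_comm]

end Coins

/-- In the random assignment process (`p₁` fixed, `p_i` uniform over the
two values different from `p_{i−1}`, and each `q_j` uniform over `{1,2}` independently),
for every pair of indices with `|i − j| ≥ 2` the probability that `p_i = p_j` and
`q_i ≠ q_j` is at least `1/8`; equivalently, with the uniform counting measure on the
space of coin flips, at least a `1/8` fraction of outcomes satisfies the event. -/
theorem random_assignment_matches (ℓ : ℕ) (hℓ : 0 < ℓ) (i j : Fin ℓ)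
    (hij : (i : ℕ) + 2 ≤ (j : ℕ) ∨ (j : ℕ) + 2 ≤ (i : ℕ)) :
    Fintype.card ((Fin ℓ → Fin 2) × (Fin ℓ → Fin 2)) ≤
      8 * (Finset.univ.filter (fun ω : (Fin ℓ → Fin 2) × (Fin ℓ → Fin 2) =>
        pSeq (fun n => ω.1 ⟨n % ℓ, Nat.mod_lt n hℓ⟩) (i : ℕ) =
          pSeq (fun n => ω.1 ⟨n % ℓ, Nat.mod_lt n hℓ⟩) (j : ℕ) ∧
        ω.2 i ≠ ω.2 j)).card := by
  show _ ≤ 8 * (matchEvent hℓ i j).card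
  rcases hij with hij | hij
  · exact card_outcome_le_eight_mul_card_matchEvent hℓ hij
  · rw [matchEvent_comm]
    exact card_outcome_le_eight_mul_card_matchEvent hℓ hij
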